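/- arXiv:2301.13652 — 2 statements merged into one kernel-verified Lean document; each statement's English description precedes it below -/
import Mathlib

section
/- If v is a cancelable valuation function, then for any sets S, T ⊆ M and any R ⊆ M \ (S ∪ T), v(S) = v(T) implies v(S ∪ R) = v(T ∪ R). -/
/-- A valuation `v` on subsets of the goods is *cancelable* if
`v (S ∪ {g}) > v (T ∪ {g})` implies `v S > v T` for every `g ∉ S ∪ T`. -/
def Cancelable {G : Type*} [DecidableEq G] (v : Finset G → ℝ) : Prop :=
  ∀ S T : Finset G, ∀ g, g ∉ S ∪ T → v (insert g S) > v (insert g T) → v S > v T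

namespace Cancelable

open Finset

variable {G : Type*} [DecidableEq G] {v : Finset G → ℝ} {S T : Finset G} {g : G}

theorem insert_le_insert (hc : Cancelable v) (hg : g ∉ S ∪ T) (h : v S ≤ v T) :
    v (insert g S) ≤ v (insert g T) :=
  not_lt.1 fun hlt => (hc S T g hg hlt).not_ge h

theorem insert_eq_insert (hc : Cancelable v) (hg : g ∉ S ∪ T) (h : v S = v T) :
    v (insert g S) = v (insert g T) :=
  le_antisymm (hc.insert_le_insert hg h.le)
    (hc.insert_le_insert (by rwa [union_comm]) h.ge)

end Cancelable

theorem cancelable_union_eq_general {G : Type*} [DecidableEq G] (v : Finset G → ℝ)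
    (hc : Cancelable v)
    (S T R : Finset G) (hR : ∀ g ∈ R, g ∉ S ∪ T) :
    v S = v T → v (S ∪ R) = v (T ∪ R) := by
  intro h
  induction R using Finset.induction_on with
  | empty => simpa
  | insert g R hgR ih =>
    have hgST := hR g (Finset.mem_insert_self g R)
    have hg : g ∉ S ∪ R ∪ (T ∪ R) := by
      simp only [Finset.mem_union, not_or] at hgST ⊢
      exact ⟨⟨hgST.1, hgR⟩, hgST.2, hgR⟩
    rw [Finset.union_insert, Finset.union_insert]
    exact hc.insert_eq_insert hg (ih fun x hx => hR x (Finset.mem_insert_of_mem hx))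

/-- If `v` is cancelable, then for any sets `S, T` and any `R` disjoint from `S ∪ T`,
`v S = v T` implies `v (S ∪ R) = v (T ∪ R)`. -/
theorem cancelable_union_eq {G : Type*} [DecidableEq G] (v : Finset G → ℝ)
    (hnn : ∀ S, 0 ≤ v S) (hc : Cancelable v)
    (S T R : Finset G) (hR : ∀ g ∈ R, g ∉ S ∪ T) :
    v S = v T → v (S ∪ R) = v (T ∪ R) :=
  cancelable_union_eq_general v hc S T R hR
end

section
/- In the Round-Robin mechanism with n agents and m = kn goods, fix an agent i, a reported profile ≻_{−i} of the others, and two reports ≻_i and ≻'_i of agent i. For r ∈ [k], let S_{r−1} and S'_{r−1} be the sets of goods allocated strictly before agent i's r-th pick under profiles (≻_i, ≻_{−i}) and (≻'_i, ≻_{−i}) respectively. Then |S'_{r−1} \ S_{r−1}| ≤ r − 1 for every r ∈ [k]. -/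
/-! Round-Robin mechanism: given reported strict total orders (duplicate-free lists
ranking the goods), in turns `t = 0, 1, 2, …` agent `t % n` receives her reported-top
good among those not yet allocated. -/

variable {G : Type*} [DecidableEq G]

/-- Goods remaining after `t` turns of the Round-Robin mechanism. -/
def rrRemaining {n : ℕ} (hn : 0 < n) (pref : Fin n → List G) (goods : Finset G) :
    ℕ → Finset G
  | 0 => goods
  | t + 1 =>
    let S := rrRemaining hn pref goods t
    match (pref ⟨t % n, Nat.mod_lt t hn⟩).find? (fun g => decide (g ∈ S)) with
    | none => S
    | some g => S.erase g

/-- The good picked at turn `t` (agent `t % n` picks her reported-top available good). -/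
def rrPicked {n : ℕ} (hn : 0 < n) (pref : Fin n → List G) (goods : Finset G) (t : ℕ) :
    Option G :=
  (pref ⟨t % n, Nat.mod_lt t hn⟩).find? fun g => decide (g ∈ rrRemaining hn pref goods t)

/-- The bundle allocated to agent `i` by Round-Robin. -/
def rrBundle {n : ℕ} (hn : 0 < n) (pref : Fin n → List G) (goods : Finset G) (i : Fin n) :
    Finset G :=
  ((Finset.range goods.card).filter fun t => t % n = i.val).biUnion fun t =>
    (rrPicked hn pref goods t).toFinset

/-- Goods allocated strictly before turn `t`. -/
def rrAllocatedBefore {n : ℕ} (hn : 0 < n) (pref : Fin n → List G) (goods : Finset G)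
    (t : ℕ) : Finset G := goods \ rrRemaining hn pref goods t

/-- A valid report is a strict total order on the goods: a duplicate-free list
enumerating exactly the goods. -/
def ValidReport (goods : Finset G) (l : List G) : Prop :=
  l.Nodup ∧ ∀ g, g ∈ l ↔ g ∈ goods

lemma rrRemaining_succ {n : ℕ} (hn : 0 < n) (pref : Fin n → List G) (goods : Finset G)
    (t : ℕ) :
    rrRemaining hn pref goods (t + 1) =
      match (pref ⟨t % n, Nat.mod_lt t hn⟩).find?
          (fun g => decide (g ∈ rrRemaining hn pref goods t)) with
      | none => rrRemaining hn pref goods t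
      | some g => (rrRemaining hn pref goods t).erase g := rfl

lemma rrRemaining_subset {n : ℕ} (hn : 0 < n) (pref : Fin n → List G) (goods : Finset G) :
    ∀ t, rrRemaining hn pref goods t ⊆ goods := by
  intro t
  induction t with
  | zero => exact Finset.Subset.refl _
  | succ t ih =>
    rw [rrRemaining_succ]
    cases h : (pref ⟨t % n, Nat.mod_lt t hn⟩).find?
        (fun g => decide (g ∈ rrRemaining hn pref goods t)) with
    | none => exact ih
    | some g => exact (Finset.erase_subset _ _).trans ih

lemma find?_cross {l : List G} {P Q : G → Bool} {g g' : G}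
    (h : l.find? P = some g) (h' : l.find? Q = some g')
    (hg' : P g' = true) (hgg : g ≠ g') : Q g = false := by
  induction l with
  | nil => simp at h
  | cons a l ih =>
    by_cases hPa : P a = true
    · rw [List.find?_cons_of_pos hPa] at h
      injection h with h; subst h
      by_cases hQa : Q a = true
      · rw [List.find?_cons_of_pos hQa] at h'
        injection h' with h'
        exact absurd h' hgg
      · simpa using hQa
    · rw [List.find?_cons_of_neg (by simpa using hPa)] at h
      by_cases hQa : Q a = true
      · rw [List.find?_cons_of_pos hQa] at h'
        injection h' with h'; subst h'
        exact absurd hg' hPa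
      · rw [List.find?_cons_of_neg (by simpa using hQa)] at h'
        exact ih h h'

lemma rrRemaining_succ_subset {n : ℕ} (hn : 0 < n) (pref : Fin n → List G)
    (goods : Finset G) (t : ℕ) :
    rrRemaining hn pref goods (t + 1) ⊆ rrRemaining hn pref goods t := by
  rw [rrRemaining_succ]
  cases h : (pref ⟨t % n, Nat.mod_lt t hn⟩).find?
      (fun g => decide (g ∈ rrRemaining hn pref goods t)) with
  | none => exact Finset.Subset.refl _
  | some g => exact Finset.erase_subset _ _

lemma filter_mod_card {n r i : ℕ} (hn : 0 < n) (hi : i < n) :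
    ((Finset.range (r * n + i)).filter (fun s => s % n = i)).card = r := by
  have himg : (Finset.range (r * n + i)).filter (fun s => s % n = i) =
      (Finset.range r).image (fun q => q * n + i) := by
    ext s
    simp only [Finset.mem_filter, Finset.mem_range, Finset.mem_image]
    constructor
    · rintro ⟨hlt, hmod⟩
      have hq : s / n * n + i = s := by
        conv_rhs => rw [← Nat.div_add_mod s n]
        rw [hmod, Nat.mul_comm]
      refine ⟨s / n, ?_, hq⟩
      have h2 : s / n * n + i < r * n + i := by rw [hq]; exact hlt
      have h3 : s / n * n < r * n := lt_of_add_lt_add_right h2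
      exact lt_of_mul_lt_mul_right h3 (Nat.zero_le n)
    · rintro ⟨q, hq, rfl⟩
      refine ⟨?_, ?_⟩
      · have : q * n < r * n := Nat.mul_lt_mul_of_lt_of_le hq (le_refl n) hn
        omega
      · rw [Nat.add_comm, Nat.add_mul_mod_self_right, Nat.mod_eq_of_lt hi]
  rw [himg, Finset.card_image_of_injective _ ?_, Finset.card_range]
  intro a b hab
  exact Nat.eq_of_mul_eq_mul_right hn (Nat.add_right_cancel hab)

lemma rr_invariant {n : ℕ} (hn : 0 < n) (goods : Finset G)
    (p p' : Fin n → List G) (i : Fin n)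
    (hp : ∀ j, (p j).Nodup ∧ ∀ g, g ∈ p j ↔ g ∈ goods)
    (hp' : ∀ j, (p' j).Nodup ∧ ∀ g, g ∈ p' j ↔ g ∈ goods)
    (hagree : ∀ j, j ≠ i → p j = p' j) :
    ∀ t, (rrRemaining hn p goods t).card = (rrRemaining hn p' goods t).card ∧
      ((rrRemaining hn p goods t) \ (rrRemaining hn p' goods t)).card ≤
        ((Finset.range t).filter (fun s => s % n = i.val)).card := by
  intro t
  induction t with
  | zero =>
    refine ⟨rfl, ?_⟩
    show ((goods : Finset G) \ goods).card ≤ _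
    simp
  | succ t ih =>
    obtain ⟨hcard, hdiff⟩ := ih
    set R := rrRemaining hn p goods t with hR
    set R' := rrRemaining hn p' goods t with hR'
    have hmono : ((Finset.range t).filter (fun s => s % n = i.val)).card ≤
        ((Finset.range (t+1)).filter (fun s => s % n = i.val)).card :=
      Finset.card_le_card (Finset.filter_subset_filter _
        (by simp [Finset.range_subset]; intro x hx; omega))
    by_cases hRe : R = ∅
    · have hR'e : R' = ∅ := Finset.card_eq_zero.mp (by rw [← hcard, hRe]; simp)
      have e1 : rrRemaining hn p goods (t+1) = ∅ := by
        have := rrRemaining_succ_subset hn p goods t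
        rw [← hR, hRe] at this
        exact Finset.subset_empty.mp this
      have e2 : rrRemaining hn p' goods (t+1) = ∅ := by
        have := rrRemaining_succ_subset hn p' goods t
        rw [← hR', hR'e] at this
        exact Finset.subset_empty.mp this
      rw [e1, e2]
      simp
    · have hR'ne : R' ≠ ∅ := by
        intro h; apply hRe
        exact Finset.card_eq_zero.mp (by rw [hcard, h]; simp)
      set j : Fin n := ⟨t % n, Nat.mod_lt t hn⟩ with hj
      obtain ⟨a, ha⟩ := Finset.nonempty_iff_ne_empty.mpr hRe
      obtain ⟨a', ha'⟩ := Finset.nonempty_iff_ne_empty.mpr hR'ne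
      obtain ⟨g, hfind⟩ : ∃ g, (p j).find? (fun x => decide (x ∈ R)) = some g := by
        cases hf : (p j).find? (fun x => decide (x ∈ R)) with
        | none =>
          exfalso
          have hmem : a ∈ p j := ((hp j).2 a).mpr (rrRemaining_subset hn p goods t ha)
          have hna := List.find?_eq_none.mp hf a hmem
          simp only [decide_eq_true_eq] at hna
          exact hna ha
        | some g => exact ⟨g, rfl⟩
      obtain ⟨g', hfind'⟩ : ∃ g', (p' j).find? (fun x => decide (x ∈ R')) = some g' := by
        cases hf : (p' j).find? (fun x => decide (x ∈ R')) with
        | none =>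
          exfalso
          have hmem : a' ∈ p' j := ((hp' j).2 a').mpr (rrRemaining_subset hn p' goods t ha')
          have hna := List.find?_eq_none.mp hf a' hmem
          simp only [decide_eq_true_eq] at hna
          exact hna ha'
        | some g' => exact ⟨g', rfl⟩
      have hgR : g ∈ R := by simpa using List.find?_some hfind
      have hg'R' : g' ∈ R' := by simpa using List.find?_some hfind'
      have e1 : rrRemaining hn p goods (t+1) = R.erase g := by
        rw [rrRemaining_succ, ← hR, ← hj, hfind]
      have e2 : rrRemaining hn p' goods (t+1) = R'.erase g' := by
        rw [rrRemaining_succ, ← hR', ← hj, hfind']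
      rw [e1, e2]
      refine ⟨by rw [Finset.card_erase_of_mem hgR, Finset.card_erase_of_mem hg'R', hcard], ?_⟩
      by_cases hji : t % n = i.val
      · have hsub : (R.erase g) \ (R'.erase g') ⊆ insert g' (R \ R') := by
          intro x hx
          simp only [Finset.mem_sdiff, Finset.mem_erase, Finset.mem_insert] at hx ⊢
          tauto
        have hfc : ((Finset.range (t+1)).filter (fun s => s % n = i.val)).card =
            ((Finset.range t).filter (fun s => s % n = i.val)).card + 1 := by
          rw [Finset.range_add_one, Finset.filter_insert, if_pos hji,
            Finset.card_insert_of_notMem (by simp)]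
        calc ((R.erase g) \ (R'.erase g')).card ≤ (insert g' (R \ R')).card :=
              Finset.card_le_card hsub
          _ ≤ (R \ R').card + 1 := Finset.card_insert_le _ _
          _ ≤ _ := by rw [hfc]; omega
      · have hfc : ((Finset.range (t+1)).filter (fun s => s % n = i.val)).card =
            ((Finset.range t).filter (fun s => s % n = i.val)).card := by
          rw [Finset.range_add_one, Finset.filter_insert, if_neg hji]
        rw [hfc]
        have hjne : j ≠ i := fun h => hji (by rw [← h])
        have hpp : p j = p' j := hagree j hjne
        rw [hpp] at hfind
        by_cases hgg : g = g'
        · subst hgg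
          refine le_trans (Finset.card_le_card ?_) hdiff
          intro x hx
          simp only [Finset.mem_sdiff, Finset.mem_erase] at hx ⊢
          tauto
        · by_cases hg'R : g' ∈ R
          · have hgnR' : g ∉ R' := by
              have := find?_cross (P := fun x => decide (x ∈ R)) (Q := fun x => decide (x ∈ R'))
                hfind hfind' (by simpa using hg'R) hgg
              simpa using this
            have hgD : g ∈ R \ R' := Finset.mem_sdiff.mpr ⟨hgR, hgnR'⟩
            have hsub : (R.erase g) \ (R'.erase g') ⊆ insert g' ((R \ R').erase g) := by
              intro x hx
              simp only [Finset.mem_sdiff, Finset.mem_erase, Finset.mem_insert] at hx ⊢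
              tauto
            calc ((R.erase g) \ (R'.erase g')).card
                ≤ (insert g' ((R \ R').erase g)).card := Finset.card_le_card hsub
              _ ≤ ((R \ R').erase g).card + 1 := Finset.card_insert_le _ _
              _ = (R \ R').card := by
                  rw [Finset.card_erase_of_mem hgD]
                  have : 0 < (R \ R').card := Finset.card_pos.mpr ⟨g, hgD⟩
                  omega
              _ ≤ _ := hdiff
          · refine le_trans (Finset.card_le_card ?_) hdiff
            intro x hx
            simp only [Finset.mem_sdiff, Finset.mem_erase] at hx ⊢
            refine ⟨hx.1.2, fun hxR' => ?_⟩
            have hxg' : x = g' := by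
              by_contra hne
              exact hx.2 ⟨hne, hxR'⟩
            exact hg'R (hxg' ▸ hx.1.2)

/-- Counting lemma: in Round-Robin with `n` agents and `m = k·n` goods, if agent `i`
unilaterally deviates from report `pref i` to `l'`, then for every `r ∈ [k]`, of the goods
allocated before agent `i`'s `r`-th pick in the deviating run (`S'_{r−1}`), at most `r − 1`
are still unallocated right before her `r`-th pick in the original run; i.e.
`|S'_{r−1} \ S_{r−1}| ≤ r − 1`. (Zero-indexed: `|S'_r \ S_r| ≤ r` for all `r < k`, where
agent `i`'s `(r+1)`-th pick happens at turn `r·n + i`.) -/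
theorem roundRobin_deviation_counting {n k : ℕ} (hn : 0 < n)
    (goods : Finset G) (hm : goods.card = k * n)
    (pref : Fin n → List G) (i : Fin n) (l' : List G)
    (hvalid : ∀ j, ValidReport goods (pref j)) (hvalid' : ValidReport goods l') :
    ∀ r, r < k →
      ((rrAllocatedBefore hn (Function.update pref i l') goods (r * n + i.val)) \
        (rrAllocatedBefore hn pref goods (r * n + i.val))).card ≤ r := by
  intro r hr
  set p' := Function.update pref i l' with hp'def
  have hvalid'' : ∀ j, ((p' j).Nodup ∧ ∀ g, g ∈ p' j ↔ g ∈ goods) := by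
    intro j
    by_cases h : j = i
    · subst h
      rw [hp'def, Function.update_self]
      exact hvalid'
    · rw [hp'def, Function.update_of_ne h]
      exact hvalid j
  have hagree : ∀ j, j ≠ i → pref j = p' j := fun j h =>
    (Function.update_of_ne h _ _).symm
  obtain ⟨hc, hd⟩ := rr_invariant hn goods pref p' i (fun j => hvalid j) hvalid'' hagree
    (r * n + i.val)
  have heq : (rrAllocatedBefore hn p' goods (r * n + i.val)) \
      (rrAllocatedBefore hn pref goods (r * n + i.val)) =
      rrRemaining hn pref goods (r * n + i.val) \
        rrRemaining hn p' goods (r * n + i.val) := by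
    unfold rrAllocatedBefore
    ext x
    have h1 : x ∈ rrRemaining hn pref goods (r * n + i.val) → x ∈ goods :=
      fun h => rrRemaining_subset hn pref goods _ h
    have h2 : x ∈ rrRemaining hn p' goods (r * n + i.val) → x ∈ goods :=
      fun h => rrRemaining_subset hn p' goods _ h
    simp only [Finset.mem_sdiff]
    tauto
  rw [heq]
  rw [filter_mod_card hn i.isLt] at hd
  exact hd
end
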